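/- arXiv:math/0610091 — 11 statements merged into one kernel-verified Lean document; each statement's English description precedes it below -/
import Mathlib

section
/- Let A be a set and let a, b be two distinct elements of A. Define the relation Θ_{ab} on A by: x Θ_{ab} y if and only if {x, y} ≠ {a, b}. Then Θ_{ab} is representable: there exists a reflexive relation R on A such that Θ_{ab} = R ∘ R⁻¹ (concretely, one may take R defined by: x R y iff x = y ∈ {a,b}, or x ∉ {a,b}). -/
/-- On a set `A` with distinct elements `a ≠ b`, the relation
`Θ_{ab}` defined by `x Θ y ↔ {x, y} ≠ {a, b}` is representable: there is a
reflexive relation `R` with `Θ = R ∘ R⁻¹`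
(where `x (R ∘ R⁻¹) y ↔ ∃ z, R x z ∧ R y z`). -/
theorem tolerance_theta_ab_representable {A : Type*} (a b : A) (hab : a ≠ b)
    (Θ : A → A → Prop)
    (hΘ : ∀ x y, Θ x y ↔ ({x, y} : Set A) ≠ ({a, b} : Set A)) :
    ∃ R : A → A → Prop, (∀ x, R x x) ∧
      (∀ x y, Θ x y ↔ ∃ z, R x z ∧ R y z) := by
  refine ⟨fun x y => (x = a ∧ y = a) ∨ (x = b ∧ y = b) ∨ (x ≠ a ∧ x ≠ b), ?_, ?_⟩
  · intro x
    by_cases hxa : x = a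
    · exact Or.inl ⟨hxa, hxa⟩
    by_cases hxb : x = b
    · exact Or.inr (Or.inl ⟨hxb, hxb⟩)
    · exact Or.inr (Or.inr ⟨hxa, hxb⟩)
  · intro x y
    rw [hΘ]
    have hout : ∀ u v : A, u ≠ a → u ≠ b → ({u, v} : Set A) ≠ ({a, b} : Set A) := by
      intro u v hua hub heq
      have ha : a ∈ ({u, v} : Set A) := heq ▸ (by simp)
      have hb : b ∈ ({u, v} : Set A) := heq ▸ (by simp)
      simp only [Set.mem_insert_iff, Set.mem_singleton_iff] at ha hb
      rcases ha with h | h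
      · exact hua h.symm
      · rcases hb with h' | h'
        · exact hub h'.symm
        · exact hab (h.trans h'.symm)
    constructor
    · intro hne
      by_cases hxa : x = a
      · by_cases hya : y = a
        · exact ⟨a, Or.inl ⟨hxa, rfl⟩, Or.inl ⟨hya, rfl⟩⟩
        by_cases hyb : y = b
        · exact absurd (by rw [hxa, hyb]) hne
        · exact ⟨a, Or.inl ⟨hxa, rfl⟩, Or.inr (Or.inr ⟨hya, hyb⟩)⟩
      by_cases hxb : x = b
      · by_cases hyb : y = b
        · exact ⟨b, Or.inr (Or.inl ⟨hxb, rfl⟩), Or.inr (Or.inl ⟨hyb, rfl⟩)⟩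
        by_cases hya : y = a
        · exact absurd (by rw [hxb, hya]; ext z; simp [Set.mem_insert_iff]; tauto) hne
        · exact ⟨b, Or.inr (Or.inl ⟨hxb, rfl⟩), Or.inr (Or.inr ⟨hya, hyb⟩)⟩
      · -- x outside {a,b}: R x z holds for any z; take z = y
        by_cases hya : y = a
        · exact ⟨a, Or.inr (Or.inr ⟨hxa, hxb⟩), Or.inl ⟨hya, rfl⟩⟩
        by_cases hyb : y = b
        · exact ⟨b, Or.inr (Or.inr ⟨hxa, hxb⟩), Or.inr (Or.inl ⟨hyb, rfl⟩)⟩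
        · exact ⟨y, Or.inr (Or.inr ⟨hxa, hxb⟩), Or.inr (Or.inr ⟨hya, hyb⟩)⟩
    · rintro ⟨z, hxz, hyz⟩ heq
      have hsym : ({y, x} : Set A) = ({a, b} : Set A) := by
        rw [← heq]; ext w; simp [Set.mem_insert_iff]; tauto
      rcases hxz with ⟨hx, hz⟩ | ⟨hx, hz⟩ | ⟨hx1, hx2⟩
      · rcases hyz with ⟨hy, hz'⟩ | ⟨hy, hz'⟩ | ⟨hy1, hy2⟩
        · -- x = a, y = a: b must be one of them
          have hb : b ∈ ({x, y} : Set A) := heq ▸ (by simp)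
          simp only [Set.mem_insert_iff, Set.mem_singleton_iff] at hb
          rcases hb with h | h
          · exact hab ((hx ▸ h).symm)
          · exact hab ((hy ▸ h).symm)
        · exact hab (hz ▸ hz' ▸ rfl)
        · exact hout y x hy1 hy2 hsym
      · rcases hyz with ⟨hy, hz'⟩ | ⟨hy, hz'⟩ | ⟨hy1, hy2⟩
        · exact hab (hz' ▸ hz ▸ rfl)
        · have ha : a ∈ ({x, y} : Set A) := heq ▸ (by simp)
          simp only [Set.mem_insert_iff, Set.mem_singleton_iff] at ha
          rcases ha with h | h
          · exact hab (hx ▸ h)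
          · exact hab (hy ▸ h)
        · exact hout y x hy1 hy2 hsym
      · exact hout x y hx1 hx2 heq
end

section
/- Let A be a set (an algebra without operations) and let Θ be any reflexive and symmetric binary relation on A. Then Θ is weakly representable: there exists a set K and a family of reflexive relations R_k (k ∈ K) on A such that Θ = ⋂_{k ∈ K} (R_k ∘ R_k⁻¹). -/
/-- In an algebra without operations, every reflexive symmetric
relation `Θ` is weakly representable: there is a set `K` and a family of
reflexive relations `R k` with `Θ = ⋂ k, (R k) ∘ (R k)⁻¹`. -/
theorem tolerance_weakly_representable_no_ops {A : Type u}
    (Θ : A → A → Prop) (hrefl : ∀ x, Θ x x) (hsymm : ∀ x y, Θ x y → Θ y x) :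
    ∃ (K : Type u) (R : K → A → A → Prop),
      (∀ k x, R k x x) ∧
      (∀ x y, Θ x y ↔ ∀ k, ∃ z, R k x z ∧ R k y z) := by
  refine ⟨{p : A × A // ¬ Θ p.1 p.2},
    fun k x z => Θ x z ∧ (x = k.1.1 → ¬ Θ z k.1.2), ?_, ?_⟩
  · rintro ⟨⟨a, b⟩, hab⟩ x
    exact ⟨hrefl x, fun hx => by subst hx; exact hab⟩
  · intro x y
    constructor
    · rintro hxy ⟨⟨a, b⟩, hab⟩
      by_cases hx : x = a
      · subst hx
        exact ⟨x, ⟨hrefl x, fun _ => hab⟩,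
          hsymm x y hxy, fun hy => by subst hy; exact hab⟩
      · exact ⟨y, ⟨hxy, fun h => absurd h hx⟩,
          hrefl y, fun hy => by subst hy; exact hab⟩
    · intro h
      by_contra hxy
      obtain ⟨z, ⟨_, hz1⟩, hz2, _⟩ := h ⟨(x, y), hxy⟩
      exact hz1 rfl (hsymm y z hz2)
end

section
/- On a 5-element set A = {a, b₁, b₂, b₃, c} (e.g. A = Fin 5 with a = 0, b₁ = 1, b₂ = 2, b₃ = 3, c = 4), let Θ be the smallest reflexive and symmetric relation such that a Θ bᵢ and bᵢ Θ c for i = 1, 2, 3 (so x Θ y iff x = y, or {x,y} = {a,bᵢ} or {x,y} = {bᵢ,c} for some i). Then Θ is not representable: there is no reflexive relation R on A with Θ = R ∘ R⁻¹. -/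
/-- The tolerance on the 5-element set `Fin 5` (with `a = 0`, `bᵢ = i` for
`i = 1, 2, 3`, `c = 4`): the smallest reflexive symmetric relation with
`a Θ bᵢ` and `bᵢ Θ c` for `i = 1, 2, 3`. -/
def Theta5 : Fin 5 → Fin 5 → Prop := fun x y =>
  x = y ∨ ∃ i ∈ ({1, 2, 3} : Set (Fin 5)),
    ({x, y} : Set (Fin 5)) = ({0, i} : Set (Fin 5)) ∨
    ({x, y} : Set (Fin 5)) = ({i, 4} : Set (Fin 5))

/-- A decidable characterization of `Theta5`. -/
lemma theta5_iff (x y : Fin 5) : Theta5 x y ↔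
    (x = y ∨ ∃ i : Fin 5, (i = 1 ∨ i = 2 ∨ i = 3) ∧
      ((x = 0 ∧ y = i ∨ x = i ∧ y = 0) ∨ (x = i ∧ y = 4 ∨ x = 4 ∧ y = i))) := by
  simp [Theta5, Set.pair_eq_pair_iff]

/-- The tolerance `Theta5` of the 5-element algebra without
operations is not representable: there is no reflexive relation `R` with
`Theta5 = R ∘ R⁻¹`. -/
theorem theta5_not_representable :
    ¬ ∃ R : Fin 5 → Fin 5 → Prop, (∀ x, R x x) ∧
      (∀ x y, Theta5 x y ↔ ∃ z, R x z ∧ R y z) := by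
  rintro ⟨R, hrefl, h⟩
  -- R ⊆ Θ
  have hsub : ∀ x z, R x z → Theta5 x z := fun x z hxz => (h x z).mpr ⟨z, hxz, hrefl z⟩
  have h04 : ¬ Theta5 0 4 := by rw [theta5_iff]; decide
  -- key claim: for each i ∈ {1,2,3}, R i 0 ∨ R i 4
  have key : ∀ i : Fin 5, (i = 1 ∨ i = 2 ∨ i = 3) → R i 0 ∨ R i 4 := by
    intro i hi
    have hΘ0i : Theta5 0 i := by rw [theta5_iff]; exact Or.inr ⟨i, hi, Or.inl (Or.inl ⟨rfl, rfl⟩)⟩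
    have hΘi4 : Theta5 i 4 := by rw [theta5_iff]; exact Or.inr ⟨i, hi, Or.inr (Or.inl ⟨rfl, rfl⟩)⟩
    obtain ⟨z, h0z, hiz⟩ := (h 0 i).mp hΘ0i
    have hz : z = 0 ∨ z = i := by
      have t1 := (theta5_iff 0 z).mp (hsub 0 z h0z)
      have t2 := (theta5_iff i z).mp (hsub i z hiz)
      rcases hi with rfl | rfl | rfl <;> revert t1 t2 <;> fin_cases z <;> decide
    rcases hz with rfl | hz
    · exact Or.inl hiz
    · rw [hz] at h0z
      -- R 0 i; now use witness for i Θ 4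
      obtain ⟨w, hiw, h4w⟩ := (h i 4).mp hΘi4
      have hw : w = i ∨ w = 4 := by
        have t1 := (theta5_iff i w).mp (hsub i w hiw)
        have t2 := (theta5_iff 4 w).mp (hsub 4 w h4w)
        rcases hi with rfl | rfl | rfl <;> revert t1 t2 <;> fin_cases w <;> decide
      rcases hw with hw | hw
      · rw [hw] at h4w; exact absurd ((h 0 4).mpr ⟨i, h0z, h4w⟩) h04
      · rw [hw] at hiw; exact Or.inr hiw
  have k1 := key 1 (Or.inl rfl)
  have k2 := key 2 (Or.inr (Or.inl rfl))
  have k3 := key 3 (Or.inr (Or.inr rfl))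
  -- distinct i, j ∈ {1,2,3} have no common R-successor
  have pair : ∀ i j : Fin 5, i ≠ j → (i = 1 ∨ i = 2 ∨ i = 3) → (j = 1 ∨ j = 2 ∨ j = 3) →
      ∀ z, R i z → R j z → False := by
    intro i j hij hi hj z hiz hjz
    have := (theta5_iff i j).mp ((h i j).mpr ⟨z, hiz, hjz⟩)
    rcases hi with rfl | rfl | rfl <;> rcases hj with rfl | rfl | rfl <;> revert this hij <;> decide
  -- pigeonhole over the three disjunctions
  rcases k1 with k1 | k1 <;> rcases k2 with k2 | k2 <;> rcases k3 with k3 | k3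
  · exact pair 1 2 (by decide) (Or.inl rfl) (Or.inr (Or.inl rfl)) 0 k1 k2
  · exact pair 1 2 (by decide) (Or.inl rfl) (Or.inr (Or.inl rfl)) 0 k1 k2
  · exact pair 1 3 (by decide) (Or.inl rfl) (Or.inr (Or.inr rfl)) 0 k1 k3
  · exact pair 2 3 (by decide) (Or.inr (Or.inl rfl)) (Or.inr (Or.inr rfl)) 4 k2 k3
  · exact pair 2 3 (by decide) (Or.inr (Or.inl rfl)) (Or.inr (Or.inr rfl)) 0 k2 k3
  · exact pair 1 3 (by decide) (Or.inl rfl) (Or.inr (Or.inr rfl)) 4 k1 k3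
  · exact pair 1 2 (by decide) (Or.inl rfl) (Or.inr (Or.inl rfl)) 4 k1 k2
  · exact pair 1 2 (by decide) (Or.inl rfl) (Or.inr (Or.inl rfl)) 4 k1 k2
end

section
/- Let S be the 7-element join-semilattice consisting of six pairwise incomparable minimal elements a, b₁, b₂, b₃, b₄, c together with a greatest element 1, where the join of any two distinct minimal elements is 1 (concretely, S may be realized as Option (Fin 6), with `none` the top element, the elements `some i` pairwise incomparable, and some i ⊔ some j = none for i ≠ j; take a = some 0, bᵢ = some i for i = 1,…,4, c = some 5). Let Θ be the smallest reflexive and symmetric relation on S such that 1 Θ x for every x ∈ S, a Θ bᵢ and bᵢ Θ c for i = 1, 2, 3, 4. Then Θ is a tolerance of S (it is compatible with ⊔), but Θ is not representable: there is no reflexive relation R on S compatible with ⊔ such that Θ = R ∘ R⁻¹. -/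
/-- The join operation of the 7-element semilattice `S = Option (Fin 6)`:
`none` is the top element `1`, and the six elements `some i` are pairwise
incomparable minimal elements whose pairwise joins (for distinct elements)
equal the top. -/
def sup7 : Option (Fin 6) → Option (Fin 6) → Option (Fin 6)
  | some i, some j => if i = j then some i else none
  | _, _ => none

/-- The tolerance on `S = Option (Fin 6)` (with `a = some 0`, `bᵢ = some i`
for `i = 1,…,4`, `c = some 5`, `1 = none`): the smallest reflexive symmetric
relation with `1 Θ x` for all `x`, `a Θ bᵢ` and `bᵢ Θ c` for `i = 1,…,4`. -/
def Theta7 : Option (Fin 6) → Option (Fin 6) → Prop := fun x y =>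
  x = y ∨ x = none ∨ y = none ∨
  ∃ i ∈ ({1, 2, 3, 4} : Set (Fin 6)),
    ({x, y} : Set (Option (Fin 6))) = ({some 0, some i} : Set (Option (Fin 6))) ∨
    ({x, y} : Set (Option (Fin 6))) = ({some i, some 5} : Set (Option (Fin 6)))

/-! Suppose `Θ = R ∘ R⁻¹` with `R` reflexive and compatible, so that `R ⊆ Θ`. A witness `z` of
`a Θ bᵢ` is a common neighbour of `a` and `bᵢ`, hence one of `a`, `bᵢ`, `1`; so `bᵢ R a`, `a R bᵢ`
or `a R 1`. Two distinct `bᵢ R a` would give `bᵢ Θ bⱼ`, and two distinct `a R bᵢ` give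
`a = a ⊔ a R bᵢ ⊔ bⱼ = 1`; with at least three `bᵢ`, pigeonhole forces `a R 1`. By the same
argument `c R 1`, and then `a Θ c`, which is false. -/

section Representation

variable {α : Type*} {R Θ : α → α → Prop}

theorem tolerance_of_rel (hrefl : ∀ x, R x x) (hrep : ∀ x y, Θ x y ↔ ∃ z, R x z ∧ R y z)
    {x y : α} (h : R x y) : Θ x y :=
  (hrep x y).2 ⟨y, h, hrefl y⟩

theorem rel_or_rel_or_rel_of_common_neighbours (hrefl : ∀ x, R x x)
    (hrep : ∀ x y, Θ x y ↔ ∃ z, R x z ∧ R y z) {a b t : α} (hab : Θ a b)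
    (hnbhd : ∀ z, Θ a z → Θ b z → z = a ∨ z = b ∨ z = t) : R b a ∨ R a b ∨ R a t := by
  obtain ⟨z, haz, hbz⟩ := (hrep a b).1 hab
  rcases hnbhd z (tolerance_of_rel hrefl hrep haz) (tolerance_of_rel hrefl hrep hbz)
    with rfl | rfl | rfl
  · exact .inl hbz
  · exact .inr (.inl haz)
  · exact .inr (.inr haz)

theorem rel_of_petals {ι : Type*} [Fintype ι] (hι : 2 < Fintype.card ι) (op : α → α → α)
    (hrefl : ∀ x, R x x) (hcomp : ∀ x y x' y', R x y → R x' y' → R (op x x') (op y y'))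
    (hrep : ∀ x y, Θ x y ↔ ∃ z, R x z ∧ R y z) {a t : α} (b : ι → α) (ha : op a a = a)
    (hab : ∀ i, Θ a (b i)) (hnbhd : ∀ i z, Θ a z → Θ (b i) z → z = a ∨ z = b i ∨ z = t)
    (hb : ∀ i j, i ≠ j → ¬ Θ (b i) (b j)) (hbt : ∀ i j, i ≠ j → op (b i) (b j) = t) :
    R a t := by
  by_contra hat
  have hdich (i : ι) : R (b i) a ∨ R a (b i) :=
    (rel_or_rel_or_rel_of_common_neighbours hrefl hrep (hab i) (hnbhd i)).imp_right
      (·.resolve_right hat)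
  obtain ⟨i, j, hij, hsame⟩ :=
    Fintype.exists_ne_map_eq_of_card_lt (fun i => R a (b i)) (by simpa using hι)
  by_cases hi : R a (b i)
  · have hj : R a (b j) := hsame ▸ hi
    exact hat (ha ▸ hbt i j hij ▸ hcomp _ _ _ _ hi hj)
  · have hj : ¬ R a (b j) := hsame ▸ hi
    exact hb i j hij ((hrep _ _).2 ⟨a, (hdich i).resolve_right hi, (hdich j).resolve_right hj⟩)

end Representation

-- Unordered pairs instead of two-element sets make `Theta7` decidable.
theorem theta7_iff (x y : Option (Fin 6)) :
    Theta7 x y ↔ x = y ∨ x = none ∨ y = none ∨ ∃ i ∈ ({1, 2, 3, 4} : Finset (Fin 6)),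
      s(x, y) = s(some 0, some i) ∨ s(x, y) = s(some i, some 5) := by
  simp only [Theta7, Set.pair_eq_pair_iff, Sym2.eq_iff, Set.mem_insert_iff,
    Set.mem_singleton_iff, Finset.mem_insert, Finset.mem_singleton]

instance : DecidableRel Theta7 := fun x y => decidable_of_iff _ (theta7_iff x y).symm

/-- `sup7` is a join-semilattice operation on the 7-element set
`Option (Fin 6)`; `Theta7` is a tolerance of this semilattice (reflexive,
symmetric and compatible with the join), but it is not representable: there is
no reflexive relation `R` compatible with the join such that
`Theta7 = R ∘ R⁻¹`. -/
theorem theta7_not_representable :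
    ((∀ x, sup7 x x = x) ∧ (∀ x y, sup7 x y = sup7 y x) ∧
     (∀ x y z, sup7 (sup7 x y) z = sup7 x (sup7 y z))) ∧
    ((∀ x, Theta7 x x) ∧ (∀ x y, Theta7 x y → Theta7 y x) ∧
     (∀ x y x' y', Theta7 x y → Theta7 x' y' →
        Theta7 (sup7 x x') (sup7 y y'))) ∧
    ¬ ∃ R : Option (Fin 6) → Option (Fin 6) → Prop,
        (∀ x, R x x) ∧
        (∀ x y x' y', R x y → R x' y' → R (sup7 x x') (sup7 y y')) ∧
        (∀ x y, Theta7 x y ↔ ∃ z, R x z ∧ R y z) := by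
  refine ⟨by decide, by decide, ?_⟩
  rintro ⟨R, hrefl, hcomp, hrep⟩
  have hpetals (a : Option (Fin 6)) (ha : a = some 0 ∨ a = some 5) : R a none := by
    rcases ha with rfl | rfl <;>
      exact rel_of_petals (by decide) sup7 hrefl hcomp hrep
        ![some 1, some 2, some 3, some 4] (by decide) (by decide) (by decide) (by decide)
        (by decide)
  have hac : ¬ Theta7 (some 0) (some 5) := by decide
  exact hac ((hrep _ _).2 ⟨none, hpetals _ (.inl rfl), hpetals _ (.inr rfl)⟩)
end

section
/- Let L be the 8-element lattice consisting of six atoms a, b₁, b₂, b₃, b₄, c, a top element 1 and a bottom element 0 (distinct atoms have meet 0 and join 1). Define the ternary operation f on L by f(x,y,z) = (x ⊔ y) ⊓ (x ⊔ z) ⊓ (y ⊔ z). Then: (1) the 7-element subset L \ {0} is closed under f; (2) f is a majority operation on L \ {0}, i.e. f(x,x,y) = f(x,y,x) = f(y,x,x) = x for all x, y ∈ L \ {0}; and (3) the tolerance Θ on L \ {0}, defined as the smallest reflexive symmetric relation with 1 Θ x for all x, a Θ bᵢ and bᵢ Θ c for i = 1,2,3,4, is compatible with f but is not representable: there is no reflexive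 relation R on L \ {0} compatible with f such that Θ = R ∘ R⁻¹. -/
/-- The join of the 8-element lattice `Fin 8` with bottom `0`, top `7` and the
six atoms `1,…,6` pairwise incomparable. -/
def sup8 : Fin 8 → Fin 8 → Fin 8 := fun x y =>
  if x = y then x else if x = 0 then y else if y = 0 then x else 7

/-- The meet of the 8-element lattice `Fin 8`. -/
def inf8 : Fin 8 → Fin 8 → Fin 8 := fun x y =>
  if x = y then x else if x = 7 then y else if y = 7 then x else 0

/-- The median operation `f(x,y,z) = (x ⊔ y) ⊓ (x ⊔ z) ⊓ (y ⊓ z)` on the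
8-element lattice. -/
def f8 (x y z : Fin 8) : Fin 8 := inf8 (inf8 (sup8 x y) (sup8 x z)) (sup8 y z)

/-- Part (1) of STATEMENT 5: the 7-element subset `L \ {0}` is closed
under `f8`. -/
theorem f8_ne_zero : ∀ x y z : Fin 8, x ≠ 0 → y ≠ 0 → z ≠ 0 → f8 x y z ≠ 0 := by
  decide

/-- The 7-element algebra `L \ {0}`. -/
def L7 : Type := {x : Fin 8 // x ≠ 0}

/-- The induced majority operation on `L \ {0}`. -/
def f7 (x y z : L7) : L7 := ⟨f8 x.1 y.1 z.1, f8_ne_zero x.1 y.1 z.1 x.2 y.2 z.2⟩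

/-- The tolerance on `L \ {0}` (with `a = 1`, `bᵢ = i + 1` for `i = 1,…,4`,
`c = 6`, top `= 7`): the smallest reflexive symmetric relation with
`7 Θ x` for all `x`, `a Θ bᵢ` and `bᵢ Θ c` for `i = 1,…,4`. -/
def Theta8 : L7 → L7 → Prop := fun x y =>
  x = y ∨ x.1 = 7 ∨ y.1 = 7 ∨
  ∃ i ∈ ({2, 3, 4, 5} : Set (Fin 8)),
    ({x.1, y.1} : Set (Fin 8)) = ({1, i} : Set (Fin 8)) ∨
    ({x.1, y.1} : Set (Fin 8)) = ({i, 6} : Set (Fin 8))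

/-!
On `L \ {0}` the median is the majority value when two arguments agree and `⊤` otherwise.
Compatibility of `Θ` follows because `⊤` is `Θ`-related to everything. If `Θ = R ∘ R⁻¹` with
`R` reflexive and compatible, then each `bᵢ` must be `R`-related to `a` or to `c`; with four
`bᵢ` two of them share such an `R`-successor, making them `Θ`-related, which they are not.
-/

section Tolerance

variable {A : Type*}

def IsCompatible (f : A → A → A → A) (R : A → A → Prop) : Prop :=
  ∀ x y z x' y' z', R x x' → R y y' → R z z' → R (f x y z) (f x' y' z')

lemma rel_of_forall_iff_exists {R Θ : A → A → Prop} (hR : ∀ x, R x x)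
    (hΘ : ∀ x y, Θ x y ↔ ∃ z, R x z ∧ R y z) {x y : A} (h : R x y) : Θ x y :=
  (hΘ x y).2 ⟨y, h, hR y⟩

lemma exists_ne_rel_rel_of_forall_or {ι : Type*} [Fintype ι] (hι : 2 < Fintype.card ι)
    {R : A → A → Prop} {a c : A} {b : ι → A} (h : ∀ i, R (b i) a ∨ R (b i) c) :
    ∃ i j, i ≠ j ∧ ∃ z, R (b i) z ∧ R (b j) z := by
  classical
  obtain ⟨i, j, hij, hR⟩ :=
    Fintype.exists_ne_map_eq_of_card_lt (fun i => decide (R (b i) a)) (by simpa using hι)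
  refine ⟨i, j, hij, ?_⟩
  by_cases hi : R (b i) a
  · exact ⟨a, hi, by simpa [hi] using hR.symm⟩
  · have hj : ¬ R (b j) a := by simpa [hi] using hR.symm
    exact ⟨c, (h i).resolve_left hi, (h j).resolve_left hj⟩

variable [DecidableEq A]

def medianOrTop (t x y z : A) : A :=
  if x = y ∨ x = z then x else if y = z then y else t

lemma medianOrTop_majority (t x y : A) :
    medianOrTop t x x y = x ∧ medianOrTop t x y x = x ∧ medianOrTop t y x x = x := by
  simp +contextual [medianOrTop]

lemma medianOrTop_top_left {t y z : A} (h : y ≠ z) : medianOrTop t t y z = t := by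
  simp [medianOrTop, h]

/-- If neither side is `t`, each side is the common value of two of its three arguments, and
two pairs of coordinates out of three always share one. -/
lemma isCompatible_medianOrTop {t : A} {Θ : A → A → Prop} (hl : ∀ x, Θ t x) (hr : ∀ x, Θ x t) :
    IsCompatible (medianOrTop t) Θ := by
  intro x y z x' y' z' hx hy hz
  simp only [medianOrTop]
  split_ifs <;> aesop

lemma rel_top_of_rel_of_ne {t p q b : A} {R : A → A → Prop}
    (hR : IsCompatible (medianOrTop t) R) (hp : R p p) (hpb : R p b) (hbp : b ≠ p)
    (hq : R q t) : R p t := by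
  simpa only [(medianOrTop_majority t p q).2.2, medianOrTop_top_left hbp] using
    hR q p p t b p hq hpb hp

end Tolerance

namespace L7

instance : DecidableEq L7 := inferInstanceAs (DecidableEq {x : Fin 8 // x ≠ 0})

instance : Fintype L7 := inferInstanceAs (Fintype {x : Fin 8 // x ≠ 0})

def top : L7 := ⟨7, by decide⟩

def a : L7 := ⟨1, by decide⟩

def b : Fin 4 → L7 := ![⟨2, by decide⟩, ⟨3, by decide⟩, ⟨4, by decide⟩, ⟨5, by decide⟩]

def c : L7 := ⟨6, by decide⟩

lemma f7_eq_medianOrTop : f7 = medianOrTop top := by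
  funext x y z
  revert x y z
  decide

lemma theta8_iff (x y : L7) : Theta8 x y ↔ x = y ∨ x.1 = 7 ∨ y.1 = 7 ∨
    ∃ i ∈ ({2, 3, 4, 5} : Finset (Fin 8)),
      (x.1 = 1 ∧ y.1 = i ∨ x.1 = i ∧ y.1 = 1) ∨ (x.1 = i ∧ y.1 = 6 ∨ x.1 = 6 ∧ y.1 = i) := by
  simp only [Theta8, Set.pair_eq_pair_iff, Set.mem_insert_iff, Set.mem_singleton_iff,
    Finset.mem_insert, Finset.mem_singleton]

instance : DecidableRel Theta8 := fun x y => decidable_of_iff _ (theta8_iff x y).symm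

lemma theta8_symm : ∀ x y, Theta8 x y → Theta8 y x := by decide

lemma theta8_isCompatible : IsCompatible f7 Theta8 :=
  f7_eq_medianOrTop ▸
    isCompatible_medianOrTop (fun _ => .inr (.inl rfl)) (fun _ => .inr (.inr (.inl rfl)))

lemma theta8_a_b : ∀ i, Theta8 a (b i) := by decide

lemma theta8_b_c : ∀ i, Theta8 (b i) c := by decide

lemma not_theta8_a_c : ¬ Theta8 a c := by decide

lemma not_theta8_b_b : ∀ i j, i ≠ j → ¬ Theta8 (b i) (b j) := by decide

lemma b_ne_a : ∀ i, b i ≠ a := by decide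

lemma b_ne_c : ∀ i, b i ≠ c := by decide

lemma eq_of_theta8_a_of_theta8_b :
    ∀ i z, Theta8 a z → Theta8 (b i) z → z = a ∨ z = b i ∨ z = top := by decide

lemma eq_of_theta8_b_of_theta8_c :
    ∀ i z, Theta8 (b i) z → Theta8 c z → z = b i ∨ z = c ∨ z = top := by decide

/-- Common `R`-successors `z` of `a, b i` and `w` of `b i, c` lie in `{a, b i, ⊤}` and
`{b i, c, ⊤}`. Unless `z = a` or `w = c`, the element `z = w` or `⊤` (via `rel_top_of_rel_of_ne`)
is a common `R`-successor of `a` and `c`, contradicting `¬ a Θ c`. -/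
lemma rel_b_a_or_rel_b_c {R : L7 → L7 → Prop} (hR : ∀ x, R x x) (hcomp : IsCompatible f7 R)
    (hrep : ∀ x y, Theta8 x y ↔ ∃ z, R x z ∧ R y z) (i : Fin 4) : R (b i) a ∨ R (b i) c := by
  rw [f7_eq_medianOrTop] at hcomp
  have hac : ∀ u, R a u → R c u → False := fun u hau hcu =>
    not_theta8_a_c ((hrep a c).2 ⟨u, hau, hcu⟩)
  have hΘ {x y : L7} : R x y → Theta8 x y := rel_of_forall_iff_exists hR hrep
  obtain ⟨z, haz, hbz⟩ := (hrep a (b i)).1 (theta8_a_b i)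
  obtain ⟨w, hbw, hcw⟩ := (hrep (b i) c).1 (theta8_b_c i)
  rcases eq_of_theta8_a_of_theta8_b i z (hΘ haz) (hΘ hbz) with rfl | rfl | rfl
  · exact .inl hbz
  all_goals rcases eq_of_theta8_b_of_theta8_c i w (hΘ hbw) (hΘ hcw) with rfl | rfl | rfl
  · exact (hac _ haz hcw).elim
  · exact .inr hbw
  · exact (hac _ (rel_top_of_rel_of_ne hcomp (hR a) haz (b_ne_a i) hcw) hcw).elim
  · exact (hac _ haz (rel_top_of_rel_of_ne hcomp (hR c) hcw (b_ne_c i) haz)).elim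
  · exact .inr hbw
  · exact (hac _ haz hcw).elim

end L7

/-- (1) `L \ {0}` is closed under the median operation `f8`;
(2) the induced operation `f7` is a majority operation on `L \ {0}`;
(3) the tolerance `Theta8` is reflexive, symmetric and compatible with `f7`,
but is not representable: there is no reflexive relation `R` compatible with
`f7` such that `Theta8 = R ∘ R⁻¹`. -/
theorem theta8_not_representable :
    (∀ x y z : Fin 8, x ≠ 0 → y ≠ 0 → z ≠ 0 → f8 x y z ≠ 0) ∧
    (∀ x y : L7, f7 x x y = x ∧ f7 x y x = x ∧ f7 y x x = x) ∧
    ((∀ x, Theta8 x x) ∧ (∀ x y, Theta8 x y → Theta8 y x) ∧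
     (∀ x y z x' y' z', Theta8 x x' → Theta8 y y' → Theta8 z z' →
        Theta8 (f7 x y z) (f7 x' y' z'))) ∧
    ¬ ∃ R : L7 → L7 → Prop,
        (∀ x, R x x) ∧
        (∀ x y z x' y' z', R x x' → R y y' → R z z' →
          R (f7 x y z) (f7 x' y' z')) ∧
        (∀ x y, Theta8 x y ↔ ∃ z, R x z ∧ R y z) := by
  refine ⟨f8_ne_zero, L7.f7_eq_medianOrTop ▸ medianOrTop_majority L7.top,
    ⟨fun _ => .inl rfl, L7.theta8_symm, L7.theta8_isCompatible⟩, ?_⟩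
  rintro ⟨R, hR, hcomp, hrep⟩
  obtain ⟨i, j, hij, z, hiz, hjz⟩ :=
    exists_ne_rel_rel_of_forall_or (by simp) (L7.rel_b_a_or_rel_b_c hR hcomp hrep)
  exact L7.not_theta8_b_b i j hij ((hrep _ _).2 ⟨z, hiz, hjz⟩)
end

section
/- Let A be a type equipped with a join-semilattice structure ⊔ (with induced order ≤) and a binary operation m : A → A → A satisfying the absorption identities m(a, a ⊔ b) = a and m(a ⊔ b, b) = b for all a, b ∈ A, and such that m is monotone in each argument (so that ≤ is a compatible relation with respect to both ⊔ and m). Let Θ be a reflexive symmetric relation on A compatible with both ⊔ and m. Then Θ is representable: the relation R = Θ ∩ ≤ is reflexive, compatible with ⊔ and m, and satisfies Θ = R ∘ R⁻¹. -/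
/-- Let `A` be a join-semilattice with a binary operation `m`
satisfying the absorption laws `m a (a ⊔ b) = a` and `m (a ⊔ b) b = b`, with
`m` monotone in each argument. Every reflexive symmetric relation `Θ`
compatible with `⊔` and `m` is representable: `R = Θ ∩ ≤` is reflexive,
compatible with `⊔` and `m`, and `Θ = R ∘ R⁻¹`. -/
theorem tolerance_representable_of_absorption {A : Type*} [SemilatticeSup A]
    (m : A → A → A)
    (habs₁ : ∀ a b, m a (a ⊔ b) = a) (habs₂ : ∀ a b, m (a ⊔ b) b = b)
    (hmono : ∀ a a' b b', a ≤ a' → b ≤ b' → m a b ≤ m a' b')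
    (Θ : A → A → Prop) (hrefl : ∀ x, Θ x x) (hsymm : ∀ x y, Θ x y → Θ y x)
    (hsup : ∀ x y x' y', Θ x y → Θ x' y' → Θ (x ⊔ x') (y ⊔ y'))
    (hm : ∀ x y x' y', Θ x y → Θ x' y' → Θ (m x x') (m y y')) :
    (∀ x, Θ x x ∧ x ≤ x) ∧
    (∀ x y x' y', (Θ x y ∧ x ≤ y) → (Θ x' y' ∧ x' ≤ y') →
      (Θ (x ⊔ x') (y ⊔ y') ∧ x ⊔ x' ≤ y ⊔ y')) ∧
    (∀ x y x' y', (Θ x y ∧ x ≤ y) → (Θ x' y' ∧ x' ≤ y') →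
      (Θ (m x x') (m y y') ∧ m x x' ≤ m y y')) ∧
    (∀ x y, Θ x y ↔ ∃ z, (Θ x z ∧ x ≤ z) ∧ (Θ y z ∧ y ≤ z)) := by
  refine ⟨fun x => ⟨hrefl x, le_rfl⟩,
    fun x y x' y' ⟨h1, h2⟩ ⟨h3, h4⟩ => ⟨hsup _ _ _ _ h1 h3, sup_le_sup h2 h4⟩,
    fun x y x' y' ⟨h1, h2⟩ ⟨h3, h4⟩ => ⟨hm _ _ _ _ h1 h3, hmono _ _ _ _ h2 h4⟩,
    fun x y => ⟨fun h => ?_, fun ⟨z, ⟨hxz, hxle⟩, ⟨hyz, hyle⟩⟩ => ?_⟩⟩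
  · refine ⟨x ⊔ y, ⟨?_, le_sup_left⟩, ⟨?_, le_sup_right⟩⟩
    · simpa using hsup x x x y (hrefl x) h
    · simpa using hsup y x y y (hsymm x y h) (hrefl y)
  · have := hm x z z y hxz (hsymm _ _ hyz)
    have e1 : m x z = x := by rw [← sup_eq_right.mpr hxle, habs₁]
    have e2 : m z y = y := by rw [← sup_eq_left.mpr hyle, habs₂]
    rwa [e1, e2] at this
end

section
/- Let L be a lattice and let Θ be a tolerance of L, i.e. a reflexive symmetric relation on L compatible with both ⊔ and ⊓. Then Θ is representable: the relation R = Θ ∩ ≤ is reflexive, compatible with ⊔ and ⊓, and satisfies Θ = R ∘ R⁻¹. In particular, all tolerances in a lattice are representable. -/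
/-- In a lattice, every tolerance (reflexive symmetric relation
compatible with `⊔` and `⊓`) is representable: `R = Θ ∩ ≤` is reflexive,
compatible with `⊔` and `⊓`, and `Θ = R ∘ R⁻¹`. -/
theorem lattice_tolerance_representable {L : Type*} [Lattice L]
    (Θ : L → L → Prop) (hrefl : ∀ x, Θ x x) (hsymm : ∀ x y, Θ x y → Θ y x)
    (hsup : ∀ x y x' y', Θ x y → Θ x' y' → Θ (x ⊔ x') (y ⊔ y'))
    (hinf : ∀ x y x' y', Θ x y → Θ x' y' → Θ (x ⊓ x') (y ⊓ y')) :
    (∀ x, Θ x x ∧ x ≤ x) ∧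
    (∀ x y x' y', (Θ x y ∧ x ≤ y) → (Θ x' y' ∧ x' ≤ y') →
      (Θ (x ⊔ x') (y ⊔ y') ∧ x ⊔ x' ≤ y ⊔ y')) ∧
    (∀ x y x' y', (Θ x y ∧ x ≤ y) → (Θ x' y' ∧ x' ≤ y') →
      (Θ (x ⊓ x') (y ⊓ y') ∧ x ⊓ x' ≤ y ⊓ y')) ∧
    (∀ x y, Θ x y ↔ ∃ z, (Θ x z ∧ x ≤ z) ∧ (Θ y z ∧ y ≤ z)) := by
  refine ⟨fun x => ⟨hrefl x, le_refl x⟩,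
    fun x y x' y' h h' => ⟨hsup _ _ _ _ h.1 h'.1, sup_le_sup h.2 h'.2⟩,
    fun x y x' y' h h' => ⟨hinf _ _ _ _ h.1 h'.1, inf_le_inf h.2 h'.2⟩,
    fun x y => ⟨fun h => ?_, fun ⟨z, ⟨hxz, hxle⟩, ⟨hyz, hyle⟩⟩ => ?_⟩⟩
  · refine ⟨x ⊔ y, ⟨?_, le_sup_left⟩, ⟨?_, le_sup_right⟩⟩
    · have := hsup x x x y (hrefl x) h
      simpa using this
    · have := hsup x y y y h (hrefl y)
      simp only [sup_idem] at this
      exact hsymm _ _ this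
  · have := hinf x z z y hxz (hsymm _ _ hyz)
    simpa [inf_eq_left.mpr hxle, inf_comm z y, inf_eq_left.mpr hyle] using this
end

section
/- Let A be a set and Θ a reflexive symmetric relation on A. Let F(Θ) be the family of all functions f : A → A such that there exist a, b ∈ A with a Θ b and the range of f contained in {a, b}. Then: (1) Θ is preserved by every f ∈ F(Θ), i.e. x Θ y implies f(x) Θ f(y); and (2) every nontrivial reflexive relation R on A preserved by all f ∈ F(Θ) (nontrivial meaning there exist c ≠ d with c R d) contains Θ, i.e. Θ ⊆ R. -/
/-- Let `Θ` be a reflexive symmetric relation on `A` and let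
`F(Θ)` be the family of all unary functions whose range is contained in some
pair `{a, b}` with `a Θ b`. Then (1) `Θ` is preserved by every `f ∈ F(Θ)`, and
(2) every nontrivial reflexive relation `R` preserved by all `f ∈ F(Θ)`
contains `Θ`. -/
theorem expansion_unary_ops {A : Type*} (Θ : A → A → Prop)
    (hrefl : ∀ x, Θ x x) (hsymm : ∀ x y, Θ x y → Θ y x) :
    (∀ f : A → A, (∃ a b, Θ a b ∧ Set.range f ⊆ ({a, b} : Set A)) →
      ∀ x y, Θ x y → Θ (f x) (f y)) ∧
    (∀ R : A → A → Prop, (∀ x, R x x) →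
      (∀ f : A → A, (∃ a b, Θ a b ∧ Set.range f ⊆ ({a, b} : Set A)) →
        ∀ x y, R x y → R (f x) (f y)) →
      (∃ c d, c ≠ d ∧ R c d) →
      ∀ x y, Θ x y → R x y) := by
  classical
  constructor
  · rintro f ⟨a, b, hab, hran⟩ x y _
    have hx : f x ∈ ({a, b} : Set A) := hran ⟨x, rfl⟩
    have hy : f y ∈ ({a, b} : Set A) := hran ⟨y, rfl⟩
    simp only [Set.mem_insert_iff, Set.mem_singleton_iff] at hx hy
    rcases hx with hx | hx <;> rcases hy with hy | hy <;> rw [hx, hy]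
    · exact hrefl a
    · exact hab
    · exact hsymm a b hab
    · exact hrefl b
  · rintro R hRrefl hpres ⟨c, d, hcd, hRcd⟩ x y hxy
    set f : A → A := fun z => if z = c then x else y with hf
    have hran : Set.range f ⊆ ({x, y} : Set A) := by
      rintro _ ⟨z, rfl⟩
      by_cases h : z = c <;> simp [hf, h]
    have := hpres f ⟨x, y, hxy, hran⟩ c d hRcd
    simpa [hf, hcd, Ne.symm hcd] using this
end

section
/- Let A be a set and Θ a reflexive symmetric relation on A that is not transitive (hence not an equivalence relation). Let F(Θ) be the family of all functions f : A → A such that there exist a, b ∈ A with a Θ b and the range of f contained in {a, b}. Then Θ is not representable in the algebra (A, F(Θ)): there is no reflexive relation R on A preserved by all f ∈ F(Θ) with Θ = R ∘ R⁻¹. -/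
/-- Let `Θ` be a reflexive symmetric relation on `A` that is not
transitive, and let `F(Θ)` be the family of all unary functions whose range is
contained in some pair `{a, b}` with `a Θ b`. Then `Θ` is not representable in
the algebra `(A, F(Θ))`: there is no reflexive relation `R` preserved by all
`f ∈ F(Θ)` with `Θ = R ∘ R⁻¹`. -/
theorem expansion_not_representable {A : Type*} (Θ : A → A → Prop)
    (hrefl : ∀ x, Θ x x) (hsymm : ∀ x y, Θ x y → Θ y x)
    (hntrans : ¬ ∀ x y z, Θ x y → Θ y z → Θ x z) :
    ¬ ∃ R : A → A → Prop, (∀ x, R x x) ∧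
      (∀ f : A → A, (∃ a b, Θ a b ∧ Set.range f ⊆ ({a, b} : Set A)) →
        ∀ x y, R x y → R (f x) (f y)) ∧
      (∀ x y, Θ x y ↔ ∃ z, R x z ∧ R y z) := by
  classical
  rintro ⟨R, hR, hpres, hrep⟩
  -- Key: Θ a b → R a b
  have key : ∀ a b, Θ a b → R a b := by
    intro a b hab
    obtain ⟨z, haz, hbz⟩ := (hrep a b).mp hab
    by_cases hazeq : a = z
    · subst hazeq
      by_cases hba : b = a
      · subst hba; exact hR b
      · have := hpres (fun u => if u = b then a else b)
          ⟨a, b, hab, by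
            rintro x ⟨u, rfl⟩
            by_cases h : u = b <;> simp [h]⟩ b a hbz
        simp only [if_true, ite_self, if_pos rfl, if_neg (fun h : a = b => hba h.symm)] at this
        exact this
    · have := hpres (fun u => if u = z then b else a)
        ⟨a, b, hab, by
          rintro x ⟨u, rfl⟩
          by_cases h : u = z <;> simp [h]⟩ a z haz
      simpa [hazeq] using this
  apply hntrans
  intro x y z hxy hyz
  exact (hrep x z).mpr ⟨y, key x y hxy, key z y (hsymm y z hyz)⟩
end

section
/- Let A be a set and Θ a reflexive symmetric relation on A that is not transitive. Let F(Θ) be the family of all functions f : A → A such that there exist a, b ∈ A with a Θ b and the range of f contained in {a, b}. Then Θ is not even weakly representable in the algebra (A, F(Θ)): there is no set K and family of reflexive relations R_k (k ∈ K) on A, each preserved by all f ∈ F(Θ), such that Θ = ⋂_{k ∈ K} (R_k ∘ R_k⁻¹). -/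
/-- Let `Θ` be a reflexive symmetric relation on `A` that is not
transitive, and let `F(Θ)` be the family of all unary functions whose range is
contained in some pair `{a, b}` with `a Θ b`. Then `Θ` is not even weakly
representable in the algebra `(A, F(Θ))`: there is no set `K` and family of
reflexive relations `R k`, each preserved by all `f ∈ F(Θ)`, with
`Θ = ⋂ k, (R k) ∘ (R k)⁻¹`. -/
theorem expansion_not_weakly_representable {A : Type u} (Θ : A → A → Prop)
    (hrefl : ∀ x, Θ x x) (hsymm : ∀ x y, Θ x y → Θ y x)
    (hntrans : ¬ ∀ x y z, Θ x y → Θ y z → Θ x z) :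
    ∀ (K : Type v) (R : K → A → A → Prop),
      (∀ k x, R k x x) →
      (∀ k (f : A → A), (∃ a b, Θ a b ∧ Set.range f ⊆ ({a, b} : Set A)) →
        ∀ x y, R k x y → R k (f x) (f y)) →
      ¬ (∀ x y, Θ x y ↔ ∀ k, ∃ z, R k x z ∧ R k y z) := by
  classical
  intro K R hR hpres h
  push_neg at hntrans
  obtain ⟨x, y, z, hxy, hyz, hxz⟩ := hntrans
  apply hxz
  rw [h x z]
  intro k
  obtain ⟨w, hxw, hyw⟩ := (h x y).mp hxy k
  obtain ⟨u, hyu, hzu⟩ := (h y z).mp hyz k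
  by_cases hxy' : x = y
  · exact hxy' ▸ ⟨u, hyu, hzu⟩
  by_cases hyz' : y = z
  · exact hyz' ▸ ⟨w, hxw, hyw⟩
  refine ⟨y, ?_, ?_⟩
  · by_cases hw : x = w
    · have h1 : R k y x := hw ▸ hyw
      have := hpres k (fun a => if a = x then y else x)
        ⟨x, y, hxy, by rintro t ⟨s, rfl⟩; by_cases hs : s = x <;> simp [hs]⟩ y x h1
      simpa [hxy', Ne.symm hxy'] using this
    · have := hpres k (fun a => if a = w then y else x)
        ⟨x, y, hxy, by rintro t ⟨s, rfl⟩; by_cases hs : s = w <;> simp [hs]⟩ x w hxw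
      simpa [hw] using this
  · by_cases hu : z = u
    · have h1 : R k y z := hu ▸ hyu
      have := hpres k (fun a => if a = y then z else y)
        ⟨y, z, hyz, by rintro t ⟨s, rfl⟩; by_cases hs : s = y <;> simp [hs]⟩ y z h1
      simpa [hyz', Ne.symm hyz'] using this
    · have := hpres k (fun a => if a = u then y else z)
        ⟨y, z, hyz, by rintro t ⟨s, rfl⟩; by_cases hs : s = u <;> simp [hs]⟩ z u hzu
      simpa [hu] using this
end

section
/- Let L be a first-order language with no relation symbols and let M be an L-structure. Suppose that every tolerance of M (every reflexive, symmetric, compatible binary relation on M) is transitive (i.e., is a congruence). Then all congruences of M permute: for any two congruences α and β of M, α ∘ β = β ∘ α. -/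
open FirstOrder

/-- A binary relation `r` on an `L`-structure `M` is compatible (admissible)
if it is preserved by every operation of `M`. -/
def IsCompatibleRel (L : FirstOrder.Language) {M : Type*} [L.Structure M]
    (r : M → M → Prop) : Prop :=
  ∀ (n : ℕ) (f : L.Functions n) (x y : Fin n → M),
    (∀ i, r (x i) (y i)) → r (FirstOrder.Language.Structure.funMap f x) (FirstOrder.Language.Structure.funMap f y)

/-- Auxiliary: one inclusion `α ∘ β ⊆ β ∘ α`. -/
theorem comp_subset_comp_of_tolerances_transitive {L : FirstOrder.Language}
    {M : Type*} [L.Structure M]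
    (htol : ∀ Θ : M → M → Prop, (∀ x, Θ x x) → (∀ x y, Θ x y → Θ y x) →
      IsCompatibleRel L Θ → ∀ x y z, Θ x y → Θ y z → Θ x z)
    (α β : M → M → Prop)
    (hαrefl : ∀ x, α x x) (hαsymm : ∀ x y, α x y → α y x)
    (hαc : IsCompatibleRel L α)
    (hβrefl : ∀ x, β x x) (hβsymm : ∀ x y, β x y → β y x)
    (hβc : IsCompatibleRel L β) :
    ∀ x z, (∃ y, α x y ∧ β y z) → ∃ y, β x y ∧ α y z := by
  set T : M → M → Prop := fun x z => (∃ y, α x y ∧ β y z) ∧ (∃ y, β x y ∧ α y z) with hT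
  have hrefl : ∀ x, T x x := fun x => ⟨⟨x, hαrefl x, hβrefl x⟩, ⟨x, hβrefl x, hαrefl x⟩⟩
  have hsymm : ∀ x y, T x y → T y x := by
    rintro x y ⟨⟨u, hu1, hu2⟩, ⟨v, hv1, hv2⟩⟩
    exact ⟨⟨v, hαsymm _ _ hv2, hβsymm _ _ hv1⟩, ⟨u, hβsymm _ _ hu2, hαsymm _ _ hu1⟩⟩
  have hcomp : IsCompatibleRel L T := by
    intro n f x y h
    refine ⟨⟨FirstOrder.Language.Structure.funMap f (fun i => (h i).1.choose), ?_, ?_⟩,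
      ⟨FirstOrder.Language.Structure.funMap f (fun i => (h i).2.choose), ?_, ?_⟩⟩
    · exact hαc n f _ _ fun i => (h i).1.choose_spec.1
    · exact hβc n f _ _ fun i => (h i).1.choose_spec.2
    · exact hβc n f _ _ fun i => (h i).2.choose_spec.1
    · exact hαc n f _ _ fun i => (h i).2.choose_spec.2
  have htrans := htol T hrefl hsymm hcomp
  rintro x z ⟨y, hxy, hyz⟩
  have h1 : T x y := ⟨⟨y, hxy, hβrefl y⟩, ⟨x, hβrefl x, hxy⟩⟩
  have h2 : T y z := ⟨⟨y, hαrefl y, hyz⟩, ⟨z, hyz, hαrefl z⟩⟩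
  exact (htrans x y z h1 h2).2

/-- Let `L` be a language with no relation symbols and `M` an
`L`-structure. If every tolerance of `M` (reflexive, symmetric, compatible
relation) is transitive (i.e. a congruence), then all congruences of `M`
permute: `α ∘ β = β ∘ α` for any two congruences `α, β`. -/
theorem congruences_permute_of_tolerances_transitive {L : FirstOrder.Language}
    {M : Type*} [L.Structure M] (hnorel : ∀ n, IsEmpty (L.Relations n))
    (htol : ∀ Θ : M → M → Prop, (∀ x, Θ x x) → (∀ x y, Θ x y → Θ y x) →
      IsCompatibleRel L Θ → ∀ x y z, Θ x y → Θ y z → Θ x z)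
    (α β : M → M → Prop)
    (hαrefl : ∀ x, α x x) (hαsymm : ∀ x y, α x y → α y x)
    (hαtrans : ∀ x y z, α x y → α y z → α x z) (hαc : IsCompatibleRel L α)
    (hβrefl : ∀ x, β x x) (hβsymm : ∀ x y, β x y → β y x)
    (hβtrans : ∀ x y z, β x y → β y z → β x z) (hβc : IsCompatibleRel L β) :
    ∀ x z, (∃ y, α x y ∧ β y z) ↔ ∃ y, β x y ∧ α y z := by
  intro x z
  constructor
  · exact comp_subset_comp_of_tolerances_transitive htol α β hαrefl hαsymm hαc hβrefl hβsymm hβc x z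
  · exact comp_subset_comp_of_tolerances_transitive htol β α hβrefl hβsymm hβc hαrefl hαsymm hαc x z
end
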